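/- Let V : K → H be a linear isometry between separable Hilbert spaces (V*V = I on K) and T_x : H → H a positive bounded self-adjoint operator. For λ > 0 and any sequence of positive step-sizes η_1,...,η_t with η_k ‖T_x‖ ≤ 1, define G_t = ∑_{k=1}^{t} η_k ∏_{i=k+1}^{t}(I_K - η_i V* T_x V). Then ‖(T_x + λ I)^{1/2} V G_t V* (T_x + λ I)^{1/2}‖ ≤ 1 + λ ∑_{k=1}^{t} η_k. -/

import Mathlib

/-!
With `A = V* T_x V` (positive, with spectrum in `[0, ‖T_x‖]`), `G_t = g(A)` for the scalar filter
`g(x) = ∑_k η_k ∏_{i>k} (1 - η_i x)`. On the spectrum each factor lies in `[0, 1]`, so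
`0 ≤ g ≤ ∑_k η_k`, and `g` telescopes to `x g(x) = 1 - ∏_i (1 - η_i x) ≤ 1`.
Put `S = √g(A)` and `M = R V S`: the operator is `M M*`, and
`‖M M*‖ = ‖M* M‖ = ‖S (A + λ) S‖ = sup_{x ∈ σ(A)} (x + λ) g(x) ≤ 1 + λ ∑_k η_k`,
because `V* R² V = V* T_x V + λ V* V = A + λ`.
-/

open Finset ContinuousLinearMap

/-- The ordered product Π_{i=a}^{b} f i of operators (identity if a > b). -/
noncomputable def opProd {K : Type*} [NormedAddCommGroup K] [InnerProductSpace ℂ K]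
    [CompleteSpace K] (f : ℕ → (K →L[ℂ] K)) (a b : ℕ) : K →L[ℂ] K :=
  ((List.range (b + 1 - a)).map fun j => f (a + j)).prod

noncomputable def gradientFilter (η : ℕ → ℝ) (t : ℕ) (x : ℝ) : ℝ :=
  ∑ k ∈ Icc 1 t, η k * ∏ i ∈ Icc (k + 1) t, (1 - η i * x)

lemma continuous_gradientFilter (η : ℕ → ℝ) (t : ℕ) : Continuous (gradientFilter η t) := by
  unfold gradientFilter; fun_prop

lemma mul_gradientFilter (η : ℕ → ℝ) (t : ℕ) (x : ℝ) :
    x * gradientFilter η t x = 1 - ∏ i ∈ Icc 1 t, (1 - η i * x) := by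
  induction t with
  | zero => simp [gradientFilter]
  | succ t ih =>
    have htop : ∀ k ∈ Icc 1 t, ∏ i ∈ Icc (k + 1) (t + 1), (1 - η i * x)
        = (∏ i ∈ Icc (k + 1) t, (1 - η i * x)) * (1 - η (t + 1) * x) := fun k hk =>
      prod_Icc_succ_top (by simp at hk; omega) _
    simp only [gradientFilter] at ih ⊢
    rw [sum_Icc_succ_top (by omega : 1 ≤ t + 1), prod_Icc_succ_top (by omega : 1 ≤ t + 1),
      sum_congr rfl fun k hk => by rw [htop k hk, ← mul_assoc], ← sum_mul,
      Icc_eq_empty (by omega : ¬ t + 1 + 1 ≤ t + 1), prod_empty]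
    linear_combination (1 - η (t + 1) * x) * ih

section FactorBounds

variable {η : ℕ → ℝ} {x : ℝ} (hη : ∀ i, 0 ≤ η i) (hx : 0 ≤ x) (hηx : ∀ i, η i * x ≤ 1)
include hη hx hηx

lemma prod_one_sub_mul_mem_Icc (s : Finset ℕ) :
    ∏ i ∈ s, (1 - η i * x) ∈ Set.Icc 0 1 :=
  ⟨prod_nonneg fun i _ => by linarith [hηx i],
    prod_le_one (fun i _ => by linarith [hηx i]) fun i _ => by nlinarith [hη i]⟩

lemma gradientFilter_nonneg (t : ℕ) : 0 ≤ gradientFilter η t x :=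
  sum_nonneg fun k _ => mul_nonneg (hη k) (prod_one_sub_mul_mem_Icc hη hx hηx _).1

lemma gradientFilter_le_sum (t : ℕ) : gradientFilter η t x ≤ ∑ k ∈ Icc 1 t, η k :=
  sum_le_sum fun k _ => mul_le_of_le_one_right (hη k) (prod_one_sub_mul_mem_Icc hη hx hηx _).2

lemma add_mul_gradientFilter_le {lam : ℝ} (hlam : 0 ≤ lam) (t : ℕ) :
    (x + lam) * gradientFilter η t x ≤ 1 + lam * ∑ k ∈ Icc 1 t, η k := by
  have hxg : x * gradientFilter η t x ≤ 1 := by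
    rw [mul_gradientFilter]
    linarith [(prod_one_sub_mul_mem_Icc hη hx hηx (Icc 1 t)).1]
  have := mul_le_mul_of_nonneg_left (gradientFilter_le_sum hη hx hηx t) hlam
  linarith

end FactorBounds

section Operators

variable {H K : Type*} [NormedAddCommGroup H] [InnerProductSpace ℂ H] [CompleteSpace H]
  [NormedAddCommGroup K] [InnerProductSpace ℂ K] [CompleteSpace K]

lemma opProd_cfc {A : K →L[ℂ] K} (hA : IsSelfAdjoint A) {f : ℕ → ℝ → ℝ}
    (hf : ∀ i, ContinuousOn (f i) (spectrum ℝ A)) (a b : ℕ) :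
    opProd (fun i => cfc (f i) A) a b = cfc (fun x => ∏ i ∈ Icc a b, f i x) A := by
  simp_rw [← Ico_add_one_right_eq_Icc, prod_Ico_eq_prod_range]
  unfold opProd
  induction b + 1 - a with
  | zero => simp [cfc_const_one ℝ A hA]
  | succ n ih =>
    simp only [List.range_succ, List.map_append, List.prod_append, List.map_cons, List.map_nil,
      List.prod_cons, List.prod_nil, mul_one, prod_range_succ]
    rw [ih, ← cfc_mul _ _ A (continuousOn_finsetProd _ fun j _ => hf _) (hf _)]

lemma sum_smul_opProd_eq_cfc_gradientFilter {A : K →L[ℂ] K} (hA : IsSelfAdjoint A)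
    (η : ℕ → ℝ) (t : ℕ) :
    ∑ k ∈ Icc 1 t, η k • opProd (fun i => 1 - η i • A) (k + 1) t
      = cfc (gradientFilter η t) A := by
  have hfactor : ∀ i, 1 - η i • A = cfc (fun x => 1 - η i * x) A := fun i => by
    rw [cfc_sub _ _ A, cfc_const_one ℝ A hA, cfc_const_mul_id _ A hA]
  have hterm : ∀ k, η k • opProd (fun i => 1 - η i • A) (k + 1) t
      = cfc (fun x => η k * ∏ i ∈ Icc (k + 1) t, (1 - η i * x)) A := fun k => by
    simp_rw [hfactor]
    rw [opProd_cfc hA (fun i => by fun_prop), ← cfc_smul (η k) _ A]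
    rfl
  simp_rw [hterm]
  rw [← cfc_sum (fun k x => η k * ∏ i ∈ Icc (k + 1) t, (1 - η i * x)) A _
    fun k _ => by fun_prop]
  congr 1
  ext x
  simp [gradientFilter]

lemma ContinuousLinearMap.IsPositive.spectrum_subset_Icc {A : K →L[ℂ] K} (hA : A.IsPositive) :
    spectrum ℝ A ⊆ Set.Icc 0 ‖A‖ := fun _ hx =>
  ⟨spectrum_nonneg_of_nonneg ((nonneg_iff_isPositive A).mpr hA) hx,
    (le_algebraMap_iff_spectrum_le hA.isSelfAdjoint).mp
      hA.isSelfAdjoint.le_algebraMap_norm_self _ hx⟩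

lemma norm_adjoint_comp_comp_le {V : K →L[ℂ] H} (hV : ‖V‖ ≤ 1) (T : H →L[ℂ] H) :
    ‖adjoint V ∘L T ∘L V‖ ≤ ‖T‖ :=
  calc ‖adjoint V ∘L T ∘L V‖ ≤ ‖adjoint V‖ * (‖T‖ * ‖V‖) :=
        (opNorm_comp_le _ _).trans (by gcongr; exact opNorm_comp_le _ _)
    _ ≤ 1 * (‖T‖ * 1) := by rw [adjoint.norm_map]; gcongr
    _ = ‖T‖ := by ring

lemma adjoint_comp_self_comp_of_mul_self_eq {V : K →L[ℂ] H} (hV : adjoint V ∘L V = 1)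
    {R T : H →L[ℂ] H} (hR : IsSelfAdjoint R) {c : ℂ} (hRR : R * R = T + c • 1) :
    adjoint (R ∘L V) ∘L (R ∘L V) = adjoint V ∘L T ∘L V + c • 1 := by
  rw [adjoint_comp, hR.adjoint_eq, ← hV]
  change adjoint V ∘L (R * R) ∘L V = _
  rw [hRR, add_comp, comp_add, smul_comp, comp_smul]
  rfl

lemma norm_comp_adjoint_eq_norm_adjoint_comp (M : K →L[ℂ] H) :
    ‖M ∘L adjoint M‖ = ‖adjoint M ∘L M‖ := by
  simpa [norm_adjoint_comp_self M] using norm_adjoint_comp_self (adjoint M)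

lemma norm_comp_cfc_comp_adjoint {B : K →L[ℂ] H} {A : K →L[ℂ] K} {f g : ℝ → ℝ}
    (hf : ContinuousOn f (spectrum ℝ A)) (hf0 : ∀ x ∈ spectrum ℝ A, 0 ≤ f x)
    (hg : ContinuousOn g (spectrum ℝ A)) (hB : adjoint B ∘L B = cfc g A) :
    ‖B ∘L cfc f A ∘L adjoint B‖ = ‖cfc (fun x => g x * f x) A‖ := by
  set S := cfc (fun x => √(f x)) A
  have hS : IsSelfAdjoint S := cfc_predicate _ A
  have hsqrt : ContinuousOn (fun x => √(f x)) (spectrum ℝ A) := hf.sqrt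
  have hSS : S * S = cfc f A := by
    rw [← cfc_mul _ _ A hsqrt hsqrt]
    exact cfc_congr fun x hx => Real.mul_self_sqrt (hf0 x hx)
  calc ‖B ∘L cfc f A ∘L adjoint B‖ = ‖(B ∘L S) ∘L adjoint (B ∘L S)‖ := by
        rw [adjoint_comp, hS.adjoint_eq, ← hSS]; rfl
    _ = ‖adjoint (B ∘L S) ∘L (B ∘L S)‖ := norm_comp_adjoint_eq_norm_adjoint_comp _
    _ = ‖S * cfc g A * S‖ := by rw [adjoint_comp, hS.adjoint_eq, ← hB]; rfl
    _ = ‖cfc (fun x => g x * f x) A‖ := by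
        rw [← cfc_mul _ _ A hsqrt hg, ← cfc_mul (fun x => √(f x) * g x) _ A (hsqrt.mul hg) hsqrt]
        congr 1
        refine cfc_congr fun x hx => ?_
        linear_combination g x * Real.mul_self_sqrt (hf0 x hx)

end Operators

theorem sandwiched_gradient_sum_bound_general
    {H K : Type*} [NormedAddCommGroup H] [InnerProductSpace ℂ H] [CompleteSpace H]
    [NormedAddCommGroup K] [InnerProductSpace ℂ K] [CompleteSpace K]
    (V : K →L[ℂ] H) (hV : ContinuousLinearMap.adjoint V ∘L V = 1)
    (Tx : H →L[ℂ] H) (hTxpos : Tx.IsPositive)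
    (lam : ℝ) (hlam : 0 < lam)
    (η : ℕ → ℝ) (hηpos : ∀ k, 0 < η k) (hηT : ∀ k, η k * ‖Tx‖ ≤ 1)
    (R : H →L[ℂ] H) (hRsa : IsSelfAdjoint R)
    (hRsq : R * R = Tx + (lam : ℂ) • 1)
    (t : ℕ) :
    ‖R ∘L V ∘L
        (∑ k ∈ Finset.Icc 1 t, η k •
          opProd (fun i => 1 - η i • (ContinuousLinearMap.adjoint V ∘L Tx ∘L V)) (k + 1) t)
        ∘L ContinuousLinearMap.adjoint V ∘L R‖ ≤
      1 + lam * ∑ k ∈ Finset.Icc 1 t, η k := by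
  set A := adjoint V ∘L Tx ∘L V
  have hA : A.IsPositive := hTxpos.adjoint_conj V
  have hVnorm : ‖V‖ ≤ 1 := opNorm_le_bound V zero_le_one fun x => by
    rw [V.norm_map_iff_adjoint_comp_self.mpr hV x, one_mul]
  have hRV : adjoint (R ∘L V) ∘L (R ∘L V) = cfc (· + lam) A := by
    rw [adjoint_comp_self_comp_of_mul_self_eq hV hRsa hRsq,
      cfc_add_const lam (fun x => x) A continuousOn_id hA.isSelfAdjoint,
      cfc_id' ℝ A hA.isSelfAdjoint,
      Algebra.algebraMap_eq_smul_one, Complex.coe_smul]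
  have hη : ∀ i, 0 ≤ η i := fun i => (hηpos i).le
  have hηx : ∀ x ∈ spectrum ℝ A, ∀ i, η i * x ≤ 1 := fun x hx i =>
    (mul_le_mul_of_nonneg_left ((hA.spectrum_subset_Icc hx).2.trans
      (norm_adjoint_comp_comp_le hVnorm Tx)) (hη i)).trans (hηT i)
  rw [sum_smul_opProd_eq_cfc_gradientFilter hA.isSelfAdjoint,
    show R ∘L V ∘L cfc (gradientFilter η t) A ∘L adjoint V ∘L R
      = (R ∘L V) ∘L cfc (gradientFilter η t) A ∘L adjoint (R ∘L V) by
        rw [adjoint_comp, hRsa.adjoint_eq]; rfl,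
    norm_comp_cfc_comp_adjoint (continuous_gradientFilter η t).continuousOn
      (fun x hx => gradientFilter_nonneg hη (hA.spectrum_subset_Icc hx).1 (hηx x hx) t)
      (by fun_prop) hRV]
  refine norm_cfc_le (add_nonneg zero_le_one (mul_nonneg hlam.le (sum_nonneg fun k _ => hη k)))
    fun x hx => ?_
  have hx0 := (hA.spectrum_subset_Icc hx).1
  rw [Real.norm_of_nonneg (mul_nonneg (by linarith)
    (gradientFilter_nonneg hη hx0 (hηx x hx) t))]
  exact add_mul_gradientFilter_le hη hx0 (hηx x hx) hlam.le t

/-- Let V : K → H be a linear isometry (V*V = I) between separable Hilbert spaces,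
    T_x positive self-adjoint on H, λ > 0, and 0 < η_k with η_k‖T_x‖ ≤ 1.  With
    G_t = ∑_{k=1}^t η_k Π_{i=k+1}^t (I - η_i V* T_x V) and R the positive square root
    of T_x + λ I, one has ‖(T_x+λI)^{1/2} V G_t V* (T_x+λI)^{1/2}‖ ≤ 1 + λ ∑_{k=1}^t η_k. -/
theorem sandwiched_gradient_sum_bound
    {H K : Type*} [NormedAddCommGroup H] [InnerProductSpace ℂ H] [CompleteSpace H]
    [TopologicalSpace.SeparableSpace H]
    [NormedAddCommGroup K] [InnerProductSpace ℂ K] [CompleteSpace K]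
    [TopologicalSpace.SeparableSpace K]
    (V : K →L[ℂ] H) (hV : ContinuousLinearMap.adjoint V ∘L V = 1)
    (Tx : H →L[ℂ] H) (hTxsa : IsSelfAdjoint Tx) (hTxpos : Tx.IsPositive)
    (lam : ℝ) (hlam : 0 < lam)
    (η : ℕ → ℝ) (hηpos : ∀ k, 0 < η k) (hηT : ∀ k, η k * ‖Tx‖ ≤ 1)
    (R : H →L[ℂ] H) (hRsa : IsSelfAdjoint R) (hRpos : R.IsPositive)
    (hRsq : R * R = Tx + (lam : ℂ) • 1)
    (t : ℕ) :
    ‖R ∘L V ∘L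
        (∑ k ∈ Finset.Icc 1 t, η k •
          opProd (fun i => 1 - η i • (ContinuousLinearMap.adjoint V ∘L Tx ∘L V)) (k + 1) t)
        ∘L ContinuousLinearMap.adjoint V ∘L R‖ ≤
      1 + lam * ∑ k ∈ Finset.Icc 1 t, η k :=
  sandwiched_gradient_sum_bound_general V hV Tx hTxpos lam hlam η hηpos hηT R hRsa hRsq t
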